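/- Fix n ≥ 1 and a prime power q, and for 1 ≤ i < j ≤ n let J_{i,j} = {(k,l) : 1 ≤ k < l ≤ n, and either k > i, or k = i and l ≥ j}. Let H = U_{J_{i,j}} and H' = U_{J'} with J' = J_{i,j} \ {(i,j)}. Let T be a random element of H with P(T = g) = 1/(k(H)·|O_H(g)|) for all g ∈ H, and let K(g) = |C_{H'}(g)|/|C_H(g)| for g ∈ H', K(g) = 0 for g ∈ H \ H'. Then the standard deviation of qK(T) satisfies sqrt(Var(qK(T))) ≤ q^2 · E[qK(T)] = q^2 · k(H')/k(H). Equivalently, writing E_r = Σ_{g ∈ H} (qK(g))^r / (k(H)·|O_H(g)|) for r = 1,2, one has E_2 − E_1^2 ≤ q^4 · E_1^2 and E_1 = k(H')/k(H). -/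

import Mathlib

/-- The pattern set: `n×n` matrices over `F` with ones on the diagonal, zeros below the
diagonal, and zeros in every above-diagonal position outside `J`. -/
def patternSet (n : ℕ) (F : Type) [Field F] (J : Set (Fin n × Fin n)) :
    Set (Matrix (Fin n) (Fin n) F) :=
  {u | (∀ i, u i i = 1) ∧ (∀ i j : Fin n, j < i → u i j = 0) ∧
    (∀ i j : Fin n, i < j → (i, j) ∉ J → u i j = 0)}

/-- The set `J_{i,j} = {(k,l) : k < l, and either k > i, or k = i and l ≥ j}`. -/
def Jset (n : ℕ) (i j : Fin n) : Set (Fin n × Fin n) :=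
  {p | p.1 < p.2 ∧ (i < p.1 ∨ (p.1 = i ∧ j ≤ p.2))}

/-!
The `(i, j)` entry is a homomorphism from `H` onto `(F, +)` with kernel `H'`, so `[H : H'] = q`.
By orbit–stabilizer the weight `1 / (k(H) |O_H(g)|)` equals `|C_H(g)| / (k(H) |H|)`, hence
`E₁ = q Σ_{h ∈ H'} |C_{H'}(h)| / (k(H) |H|) = k(H') / k(H)`. As `0 ≤ K ≤ 1` we get `E₂ ≤ q E₁`,
and double counting commuting pairs gives Gallagher's bound `k(H) ≤ [H : H'] k(H')`, i.e.
`1 ≤ q E₁`. Therefore `E₂ - E₁² ≤ q E₁ ≤ (q E₁)² ≤ q⁴ E₁²`.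
-/

open Subgroup

section ConjClasses
variable {G Γ : Type*} [Group G] [Group Γ]

theorem MulEquiv.card_conjClasses_eq {H : Type*} [Group H] (e : G ≃* H) :
    Nat.card (ConjClasses G) = Nat.card (ConjClasses H) := by
  refine Nat.card_congr ⟨ConjClasses.map e.toMonoidHom, ConjClasses.map e.symm.toMonoidHom,
    fun c => ?_, fun c => ?_⟩
  · obtain ⟨a, rfl⟩ := ConjClasses.mk_surjective c
    exact congrArg ConjClasses.mk (e.symm_apply_apply a)
  · obtain ⟨a, rfl⟩ := ConjClasses.mk_surjective c
    exact congrArg ConjClasses.mk (e.apply_symm_apply a)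

theorem card_carrier_mul_card_centralizer (g : G) :
    Nat.card (ConjClasses.mk g).carrier * Nat.card (centralizer {g}) = Nat.card G := by
  rw [nat_card_centralizer_nat_card_stabilizer, ← ConjAct.orbit_eq_carrier_conjClasses,
    Nat.card_coe_set_eq, ← MulAction.index_stabilizer, mul_comm, card_mul_index]
  exact Nat.card_congr ConjAct.ofConjAct.toEquiv

theorem sum_card_centralizer [Fintype G] :
    ∑ g : G, Nat.card (centralizer {g}) = Nat.card (ConjClasses G) * Nat.card G := by
  rw [← card_comm_eq_card_conjClasses_mul_card,
    Nat.card_congr (Equiv.subtypeProdEquivSigmaSubtype Commute), Nat.card_sigma]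
  refine Finset.sum_congr rfl fun g _ => Nat.card_congr (Equiv.subtypeEquivRight fun h => ?_)
  rw [mem_centralizer_singleton_iff]
  exact eq_comm

theorem Subgroup.card_le_index_mul_card_inf (N K : Subgroup G) [N.FiniteIndex] :
    Nat.card K ≤ N.index * Nat.card ↥(N ⊓ K) := by
  have hsplit : Nat.card ↥(N ⊓ K) * N.relIndex K = Nat.card K := by
    rw [← relIndex_bot_left, ← relIndex_bot_left, ← inf_relIndex_right N K]
    exact relIndex_mul_relIndex ⊥ (N ⊓ K) K bot_le inf_le_right
  have hrel : N.relIndex K ≤ N.index := by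
    rw [← relIndex_top_right]
    exact relIndex_le_of_le_right le_top
      (by rw [relIndex_top_right]; exact FiniteIndex.index_ne_zero)
  rw [← hsplit, mul_comm]
  exact Nat.mul_le_mul_right _ hrel

theorem Subgroup.card_mul_relIndex {G N : Subgroup Γ} (h : N ≤ G) :
    Nat.card N * N.relIndex G = Nat.card G := by
  rw [← relIndex_bot_left, ← relIndex_bot_left]
  exact relIndex_mul_relIndex ⊥ N G bot_le h

theorem Subgroup.card_centralizer_eq_card_inf_centralizer (N : Subgroup G) (x : N) :
    Nat.card (centralizer {x} : Subgroup N) = Nat.card ↥(N ⊓ centralizer {(x : G)}) := by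
  have h : centralizer {x} = (N ⊓ centralizer {(x : G)}).subgroupOf N := by
    ext y
    simp only [mem_subgroupOf, inf_subgroupOf_left, mem_centralizer_singleton_iff]
    exact Subtype.ext_iff
  rw [h]
  exact Nat.card_congr (subgroupOfEquivOfLe inf_le_left).toEquiv

theorem Subgroup.sum_card_inf_centralizer [Fintype G] (N : Subgroup G) [DecidablePred (· ∈ N)] :
    ∑ g : G, Nat.card ↥(N ⊓ centralizer {g}) = ∑ x : N, Nat.card (centralizer {(x : G)}) := by
  classical
  simp only [Nat.card_eq_fintype_card, Fintype.card_subtype, mem_inf, Finset.card_filter]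
  rw [Finset.sum_comm, ← Finset.sum_subtype (Finset.univ.filter (· ∈ N)) (by simp)
    (fun y => ∑ g, if g ∈ centralizer {y} then 1 else 0), Finset.sum_filter]
  refine Finset.sum_congr rfl fun y _ => ?_
  by_cases hy : y ∈ N <;> simp [hy, mem_centralizer_singleton_iff, eq_comm]

/-- Gallagher's bound, by double counting commuting pairs in `G × N`. -/
theorem Subgroup.card_conjClasses_le_index_mul [Finite G] (N : Subgroup G) :
    Nat.card (ConjClasses G) ≤ N.index * Nat.card (ConjClasses N) := by
  classical
  have := Fintype.ofFinite G
  have key : Nat.card (ConjClasses G) * Nat.card G ≤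
      N.index * Nat.card (ConjClasses N) * Nat.card G :=
    calc Nat.card (ConjClasses G) * Nat.card G
        = ∑ g : G, Nat.card (centralizer {g}) := sum_card_centralizer.symm
      _ ≤ ∑ g : G, N.index * Nat.card ↥(N ⊓ centralizer {g}) :=
        Finset.sum_le_sum fun g _ => N.card_le_index_mul_card_inf _
      _ = N.index * ∑ x : N, Nat.card (centralizer {(x : G)}) := by
        rw [← Finset.mul_sum, sum_card_inf_centralizer]
      _ ≤ N.index * ∑ x : N, N.index * Nat.card ↥(N ⊓ centralizer {(x : G)}) := by
        gcongr with x
        exact N.card_le_index_mul_card_inf _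
      _ = N.index * (N.index * (Nat.card (ConjClasses N) * Nat.card N)) := by
        simp_rw [← card_centralizer_eq_card_inf_centralizer]
        rw [← Finset.mul_sum, sum_card_centralizer]
      _ = N.index * Nat.card (ConjClasses N) * Nat.card G := by
        rw [← N.index_mul_card]
        ring
  exact Nat.le_of_mul_le_mul_right key Nat.card_pos

theorem Subgroup.card_conjClasses_le_relIndex_mul {G N : Subgroup Γ} (h : N ≤ G) [Finite G] :
    Nat.card (ConjClasses G) ≤ N.relIndex G * Nat.card (ConjClasses N) := by
  rw [← (subgroupOfEquivOfLe h).card_conjClasses_eq]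
  exact (N.subgroupOf G).card_conjClasses_le_index_mul

end ConjClasses

section ClassUniformMean
variable {G : Type*} [Group G] [Fintype G]

/-- `E[f(T)]` for the random `T` with `P(T = g) = 1 / (k(G) |O_G(g)|)`: a uniformly chosen
conjugacy class, then a uniform element of it. -/
noncomputable def classUniformMean (f : G → ℚ) : ℚ :=
  ∑ g, f g / (Nat.card (ConjClasses G) * Nat.card (ConjClasses.mk g).carrier)

theorem classUniformMean_eq_sum_mul_card_centralizer (f : G → ℚ) :
    classUniformMean f =
      (∑ g, f g * Nat.card (centralizer {g})) / (Nat.card (ConjClasses G) * Nat.card G) := by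
  rw [classUniformMean, Finset.sum_div]
  refine Finset.sum_congr rfl fun g _ => ?_
  have hC : (Nat.card (centralizer {g}) : ℚ) ≠ 0 := Nat.cast_ne_zero.mpr Nat.card_pos.ne'
  rw [← card_carrier_mul_card_centralizer g, Nat.cast_mul]
  field_simp

theorem classUniformMean_const_mul (c : ℚ) (f : G → ℚ) :
    classUniformMean (fun g => c * f g) = c * classUniformMean f := by
  simp only [classUniformMean, Finset.mul_sum, mul_div_assoc]

theorem classUniformMean_mono {f f' : G → ℚ} (h : ∀ g, f g ≤ f' g) :
    classUniformMean f ≤ classUniformMean f' :=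
  Finset.sum_le_sum fun g _ => div_le_div_of_nonneg_right (h g) (by positivity)

end ClassUniformMean

section CentralizerRatio
variable {Γ : Type*} [Group Γ] (G N : Subgroup Γ)

open Classical in
/-- The function `K` of the statement, with `G = H` and `N = H'`. -/
noncomputable def centralizerRatio (g : G) : ℚ :=
  if hg : (g : Γ) ∈ N then
    (Nat.card (centralizer {(⟨g, hg⟩ : N)} : Subgroup N) : ℚ) /
      Nat.card (centralizer {g} : Subgroup G)
  else 0

theorem centralizerRatio_nonneg (g : G) : 0 ≤ centralizerRatio G N g := by
  unfold centralizerRatio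
  split_ifs <;> positivity

variable {G N}

theorem centralizerRatio_le_one (h : N ≤ G) [Finite G] (g : G) : centralizerRatio G N g ≤ 1 := by
  unfold centralizerRatio
  split_ifs with hg
  · refine div_le_one_of_le₀ (Nat.cast_le.mpr ?_) (Nat.cast_nonneg _)
    refine Nat.card_le_card_of_injective (fun y => ⟨inclusion h y, ?_⟩) fun y z hyz => ?_
    · have hy : (y : N) * ⟨g, hg⟩ = ⟨g, hg⟩ * y := mem_centralizer_singleton_iff.mp y.2
      exact mem_centralizer_singleton_iff.mpr (Subtype.ext (congrArg (Subtype.val : N → Γ) hy))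
    · exact Subtype.ext (inclusion_injective h (congrArg Subtype.val hyz))
  · exact zero_le_one

theorem sum_centralizerRatio_mul_card_centralizer (h : N ≤ G) [Fintype G] :
    ∑ g : G, centralizerRatio G N g * Nat.card (centralizer {g}) =
      Nat.card (ConjClasses N) * Nat.card N := by
  have : Finite N := Finite.of_injective _ (inclusion_injective h)
  have := Fintype.ofFinite N
  rw [← Nat.cast_mul, ← sum_card_centralizer, Nat.cast_sum]
  symm
  refine Fintype.sum_of_injective (inclusion h) (inclusion_injective h) _ _
    (fun g hg => ?_) fun x => ?_
  · have hgN : (g : Γ) ∉ N := fun hgN => hg ⟨⟨g, hgN⟩, rfl⟩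
    simp [centralizerRatio, hgN]
  · have hC : (Nat.card (centralizer {inclusion h x}) : ℚ) ≠ 0 :=
      Nat.cast_ne_zero.mpr Nat.card_pos.ne'
    simp [centralizerRatio, hC]

end CentralizerRatio

theorem sub_sq_le_pow_four_mul_sq {α : Type*} [Field α] [LinearOrder α] [IsStrictOrderedRing α]
    {m e₁ e₂ : α} (hm : 1 ≤ m) (h₂ : e₂ ≤ m * e₁) (h₁ : 1 ≤ m * e₁) :
    e₂ - e₁ ^ 2 ≤ m ^ 4 * e₁ ^ 2 :=
  calc e₂ - e₁ ^ 2 ≤ m * e₁ := by nlinarith [sq_nonneg e₁]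
    _ ≤ (m * e₁) ^ 2 := by nlinarith
    _ = m ^ 2 * e₁ ^ 2 := by ring
    _ ≤ m ^ 4 * e₁ ^ 2 := by gcongr; norm_num

section Variance
variable {Γ : Type*} [Group Γ] {G N : Subgroup Γ}

theorem classUniformMean_centralizerRatio (h : N ≤ G) [Fintype G] :
    classUniformMean (centralizerRatio G N) =
      Nat.card (ConjClasses N) * Nat.card N / (Nat.card (ConjClasses G) * Nat.card G) := by
  rw [classUniformMean_eq_sum_mul_card_centralizer, sum_centralizerRatio_mul_card_centralizer h]

theorem classUniformMean_relIndex_mul_centralizerRatio (h : N ≤ G) [Fintype G] :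
    classUniformMean (fun g => (N.relIndex G : ℚ) * centralizerRatio G N g) =
      Nat.card (ConjClasses N) / Nat.card (ConjClasses G) := by
  have : Finite N := Finite.of_injective _ (inclusion_injective h)
  have hm : (N.relIndex G : ℚ) ≠ 0 := Nat.cast_ne_zero.mpr index_ne_zero_of_finite
  have hN : (Nat.card N : ℚ) ≠ 0 := Nat.cast_ne_zero.mpr Nat.card_pos.ne'
  have hk : (Nat.card (ConjClasses G) : ℚ) ≠ 0 := Nat.cast_ne_zero.mpr Nat.card_pos.ne'
  rw [classUniformMean_const_mul, classUniformMean_centralizerRatio h, ← card_mul_relIndex h]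
  push_cast
  field_simp

theorem classUniformMean_sq_relIndex_mul_centralizerRatio_le (h : N ≤ G) [Fintype G] :
    classUniformMean (fun g => ((N.relIndex G : ℚ) * centralizerRatio G N g) ^ 2) ≤
      N.relIndex G * classUniformMean (fun g => (N.relIndex G : ℚ) * centralizerRatio G N g) := by
  rw [← classUniformMean_const_mul]
  refine classUniformMean_mono fun g => ?_
  have hm : (0 : ℚ) ≤ N.relIndex G := Nat.cast_nonneg _
  have hX : 0 ≤ (N.relIndex G : ℚ) * centralizerRatio G N g :=
    mul_nonneg hm (centralizerRatio_nonneg G N g)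
  rw [sq]
  exact mul_le_mul_of_nonneg_right (mul_le_of_le_one_right hm (centralizerRatio_le_one h g)) hX

theorem classUniformMean_variance_le (h : N ≤ G) [Fintype G] :
    classUniformMean (fun g => ((N.relIndex G : ℚ) * centralizerRatio G N g) ^ 2) -
        classUniformMean (fun g => (N.relIndex G : ℚ) * centralizerRatio G N g) ^ 2 ≤
      (N.relIndex G : ℚ) ^ 4 *
        classUniformMean (fun g => (N.relIndex G : ℚ) * centralizerRatio G N g) ^ 2 := by
  have hm : (1 : ℚ) ≤ N.relIndex G :=
    Nat.one_le_cast.mpr (Nat.pos_of_ne_zero index_ne_zero_of_finite)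
  have hk : (0 : ℚ) < Nat.card (ConjClasses G) := Nat.cast_pos.mpr Nat.card_pos
  have hmean : 1 ≤ (N.relIndex G : ℚ) *
      classUniformMean (fun g => (N.relIndex G : ℚ) * centralizerRatio G N g) := by
    rw [classUniformMean_relIndex_mul_centralizerRatio h, mul_div_assoc', le_div_iff₀ hk, one_mul]
    exact_mod_cast card_conjClasses_le_relIndex_mul h
  exact sub_sq_le_pow_four_mul_sq hm (classUniformMean_sq_relIndex_mul_centralizerRatio_le h) hmean

end Variance

section PatternGroup
variable {n : ℕ} {F : Type} [Field F] {i j : Fin n}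

theorem patternSet_mono {J J' : Set (Fin n × Fin n)} (h : J ⊆ J') :
    patternSet n F J ⊆ patternSet n F J' :=
  fun _ ⟨hdiag, hlow, hout⟩ => ⟨hdiag, hlow, fun k l hkl hJ => hout k l hkl fun h' => hJ (h h')⟩

theorem mem_patternSet_diff_singleton_iff {J : Set (Fin n × Fin n)} (hij : i < j)
    {u : Matrix (Fin n) (Fin n) F} (hu : u ∈ patternSet n F J) :
    u ∈ patternSet n F (J \ {(i, j)}) ↔ u i j = 0 := by
  obtain ⟨hdiag, hlow, hout⟩ := hu
  refine ⟨fun ⟨_, _, hout'⟩ => hout' i j hij fun hmem => hmem.2 rfl,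
    fun hu0 => ⟨hdiag, hlow, fun k l hkl hkl' => ?_⟩⟩
  by_cases hJ : (k, l) ∈ J
  · obtain ⟨rfl, rfl⟩ : k = i ∧ l = j := by simpa using not_and_not_right.mp hkl' hJ
    exact hu0
  · exact hout k l hkl hJ

theorem transvection_mem_patternSet {J : Set (Fin n × Fin n)} (hij : i < j) (hJ : (i, j) ∈ J)
    (t : F) : Matrix.transvection i j t ∈ patternSet n F J := by
  have hoff : ∀ k l, (k, l) ≠ (i, j) → Matrix.transvection i j t k l = (1 : Matrix _ _ F) k l :=
    fun k l hkl => by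
      rw [Matrix.transvection, Matrix.add_apply, Matrix.single_apply_of_ne, add_zero]
      rintro ⟨rfl, rfl⟩
      exact hkl rfl
  refine ⟨fun k => ?_, fun k l hlk => ?_, fun k l hkl hkl' => ?_⟩
  · rw [hoff k k (by rintro ⟨⟩; exact hij.ne rfl), Matrix.one_apply_eq]
  · rw [hoff k l (by rintro ⟨⟩; exact lt_asymm hij hlk), Matrix.one_apply_ne hlk.ne']
  · rw [hoff k l (by rintro ⟨⟩; exact hkl' hJ), Matrix.one_apply_ne hkl.ne]

theorem patternSet_Jset_mul_apply (hij : i < j) {u v : Matrix (Fin n) (Fin n) F}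
    (hu : u ∈ patternSet n F (Jset n i j)) (hv : v ∈ patternSet n F (Jset n i j)) :
    (u * v) i j = u i j + v i j := by
  obtain ⟨hu1, hu2, hu3⟩ := hu
  obtain ⟨hv1, hv2, -⟩ := hv
  -- `(i, k) ∉ J_{i,j}` for `i < k < j`, so only `k = i` and `k = j` contribute
  rw [Matrix.mul_apply, Finset.sum_eq_add_of_mem i j (Finset.mem_univ _) (Finset.mem_univ _)
    hij.ne fun k _ ⟨hki, hkj⟩ => ?_, hu1, hv1, one_mul, mul_one, add_comm]
  rcases lt_or_gt_of_ne hkj with hkj | hjk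
  · have : u i k = 0 := by
      rcases lt_or_gt_of_ne hki with hki | hik
      · exact hu2 i k hki
      · exact hu3 i k hik fun ⟨_, h⟩ => h.elim (lt_irrefl i) fun h' => hkj.not_ge h'.2
    rw [this, zero_mul]
  · rw [hv2 k j hjk, mul_zero]

end PatternGroup

section PatternSubgroup
variable {n : ℕ} {F : Type} [Field F] {i j : Fin n} {H H' : Subgroup (GL (Fin n) F)}

def patternEntryHom (hij : i < j)
    (hH : ∀ g : GL (Fin n) F, g ∈ H ↔
      (g : Matrix (Fin n) (Fin n) F) ∈ patternSet n F (Jset n i j)) :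
    H →* Multiplicative F :=
  MonoidHom.mk' (fun g => Multiplicative.ofAdd (((g : GL (Fin n) F) : Matrix _ _ F) i j))
    fun g h => congrArg Multiplicative.ofAdd
      (patternSet_Jset_mul_apply hij ((hH g).mp g.2) ((hH h).mp h.2))

theorem relIndex_eq_card_of_patternSet [Fintype F] (hij : i < j)
    (hH : ∀ g : GL (Fin n) F, g ∈ H ↔
      (g : Matrix (Fin n) (Fin n) F) ∈ patternSet n F (Jset n i j))
    (hH' : ∀ g : GL (Fin n) F, g ∈ H' ↔
      (g : Matrix (Fin n) (Fin n) F) ∈ patternSet n F (Jset n i j \ {(i, j)})) :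
    H'.relIndex H = Fintype.card F := by
  have hker : (patternEntryHom hij hH).ker = H'.subgroupOf H := by
    ext g
    rw [MonoidHom.mem_ker, mem_subgroupOf, hH',
      mem_patternSet_diff_singleton_iff hij ((hH g).mp g.2)]
    exact ofAdd_eq_one
  have hsurj : Function.Surjective (patternEntryHom hij hH) := fun t =>
    ⟨⟨Matrix.GeneralLinearGroup.mkOfDetNeZero (Matrix.transvection i j t.toAdd)
        (by rw [Matrix.det_transvection_of_ne _ _ hij.ne]; exact one_ne_zero),
      (hH _).mpr (transvection_mem_patternSet (J := Jset n i j) hij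
        ⟨hij, Or.inr ⟨rfl, le_rfl⟩⟩ _)⟩,
      by simp [patternEntryHom, Matrix.transvection, hij.ne]⟩
  rw [relIndex, ← hker, index_ker, MonoidHom.range_eq_top.mpr hsurj, card_top,
    Nat.card_eq_fintype_card, Fintype.card_multiplicative]

end PatternSubgroup

open scoped Classical in
theorem importance_sampling_variance_bound_pattern_groups_general
    (n : ℕ) (F : Type) [Field F] [Fintype F]
    (i j : Fin n) (hij : i < j)
    (H H' : Subgroup (GL (Fin n) F))
    (hH : ∀ g : GL (Fin n) F, g ∈ H ↔
      (g : Matrix (Fin n) (Fin n) F) ∈ patternSet n F (Jset n i j))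
    (hH' : ∀ g : GL (Fin n) F, g ∈ H' ↔
      (g : Matrix (Fin n) (Fin n) F) ∈ patternSet n F (Jset n i j \ {(i, j)}))
    (K : H → ℚ)
    (hK : ∀ g : H, K g = if hg : (g : GL (Fin n) F) ∈ H' then
        (Nat.card (Subgroup.centralizer {(⟨(g : GL (Fin n) F), hg⟩ : H')} : Subgroup H') : ℚ) /
          (Nat.card (Subgroup.centralizer {g} : Subgroup H) : ℚ)
      else 0)
    (E₁ E₂ : ℚ)
    (hE₁ : E₁ = ∑ g : H, ((Fintype.card F : ℚ) * K g) /
      ((Nat.card (ConjClasses H) : ℚ) * (Nat.card (ConjClasses.mk g).carrier : ℚ)))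
    (hE₂ : E₂ = ∑ g : H, ((Fintype.card F : ℚ) * K g) ^ 2 /
      ((Nat.card (ConjClasses H) : ℚ) * (Nat.card (ConjClasses.mk g).carrier : ℚ))) :
    E₂ - E₁ ^ 2 ≤ (Fintype.card F : ℚ) ^ 4 * E₁ ^ 2 ∧
    E₁ = (Nat.card (ConjClasses H') : ℚ) / (Nat.card (ConjClasses H) : ℚ) := by
  have hle : H' ≤ H := fun g hg => (hH g).mpr (patternSet_mono Set.sdiff_subset ((hH' g).mp hg))
  have hq : (Fintype.card F : ℚ) = H'.relIndex H := by
    rw [relIndex_eq_card_of_patternSet hij hH hH']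
  obtain rfl : K = centralizerRatio H H' := funext hK
  rw [hq] at hE₁ hE₂ ⊢
  obtain rfl : E₁ = classUniformMean fun g => (H'.relIndex H : ℚ) * centralizerRatio H H' g := hE₁
  obtain rfl : E₂ =
      classUniformMean fun g => ((H'.relIndex H : ℚ) * centralizerRatio H H' g) ^ 2 := hE₂
  exact ⟨classUniformMean_variance_le hle, classUniformMean_relIndex_mul_centralizerRatio hle⟩

open scoped Classical in
theorem importance_sampling_variance_bound_pattern_groups
    (n : ℕ) (hn : 1 ≤ n) (F : Type) [Field F] [Fintype F]
    (i j : Fin n) (hij : i < j)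
    (H H' : Subgroup (GL (Fin n) F))
    (hH : ∀ g : GL (Fin n) F, g ∈ H ↔
      (g : Matrix (Fin n) (Fin n) F) ∈ patternSet n F (Jset n i j))
    (hH' : ∀ g : GL (Fin n) F, g ∈ H' ↔
      (g : Matrix (Fin n) (Fin n) F) ∈ patternSet n F (Jset n i j \ {(i, j)}))
    (K : H → ℚ)
    (hK : ∀ g : H, K g = if hg : (g : GL (Fin n) F) ∈ H' then
        (Nat.card (Subgroup.centralizer {(⟨(g : GL (Fin n) F), hg⟩ : H')} : Subgroup H') : ℚ) /
          (Nat.card (Subgroup.centralizer {g} : Subgroup H) : ℚ)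
      else 0)
    (E₁ E₂ : ℚ)
    (hE₁ : E₁ = ∑ g : H, ((Fintype.card F : ℚ) * K g) /
      ((Nat.card (ConjClasses H) : ℚ) * (Nat.card (ConjClasses.mk g).carrier : ℚ)))
    (hE₂ : E₂ = ∑ g : H, ((Fintype.card F : ℚ) * K g) ^ 2 /
      ((Nat.card (ConjClasses H) : ℚ) * (Nat.card (ConjClasses.mk g).carrier : ℚ))) :
    E₂ - E₁ ^ 2 ≤ (Fintype.card F : ℚ) ^ 4 * E₁ ^ 2 ∧
    E₁ = (Nat.card (ConjClasses H') : ℚ) / (Nat.card (ConjClasses H) : ℚ) :=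
  importance_sampling_variance_bound_pattern_groups_general n F i j hij H H' hH hH' K hK E₁ E₂ hE₁
    hE₂
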